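/- arXiv:1409.6172 — 2 statements merged into one kernel-verified Lean document; each statement's English description precedes it below -/
import Mathlib

section
/- In the PPE construction's iterative best-class procedure, the worst payoffs of the sequence of best Newcombian Classes of increasing order are strictly increasing: if the best class of order k does not yet discard all outcomes in sibling subtrees, then the best class of order k+1 has a strictly greater worst payoff. Consequently, since outcomes are finite, the procedure terminates. -/
open Classical

section PPE

variable {O C : Type*} [Fintype O] [DecidableEq O] [DecidableEq C]

/-- Target set of a Newcombian State (a list of children of the current node),
defined recursively from the remaining-outcome set `I`, the descendant map `D`
and the current player's payoff `pay`. -/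
noncomputable def target (I : Finset O) (D : C → Finset O) (pay : O → ℤ) :
    List C → Finset O
  | [] => ∅
  | [n] => I ∩ D n
  | n :: m :: p =>
      let Tp := target I D pay (m :: p)
      (I ∩ D n).filter (fun o => ¬ (Tp.Nonempty ∧ ∀ o' ∈ Tp, pay o < pay o'))

/-- A Newcombian State at the current node: a nonempty list of children with no
two consecutive elements equal. -/
def ValidState (F : Finset C) (η : List C) : Prop :=
  η ≠ [] ∧ (∀ n ∈ η, n ∈ F) ∧ η.Chain' (· ≠ ·)

/-- `o` is discarded by some Newcombian State at the current node. -/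
def Discards (I : Finset O) (D : C → Finset O) (pay : O → ℤ) (F : Finset C)
    (o : O) : Prop :=
  ∃ n p, ValidState F (n :: p) ∧ o ∈ I ∧ o ∉ D n ∧
    (target I D pay (n :: p)).Nonempty ∧
    ∀ o' ∈ target I D pay (n :: p), pay o < pay o'

/-- The set of outcomes remaining after the discarding process at the current node. -/
noncomputable def survivors (I : Finset O) (D : C → Finset O) (pay : O → ℤ)
    (F : Finset C) : Finset O :=
  I.filter (fun o => ¬ Discards I D pay F o)

/-- Worst payoff of a Newcombian State. -/
noncomputable def wp (I : Finset O) (D : C → Finset O) (pay : O → ℤ)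
    (η : List C) : ℤ :=
  sInf (pay '' (target I D pay η : Set O))

end PPE

/-!
The worst outcome `o` of `(n, m :: q)` survived the filter defining the target set, so it is not
strictly below every outcome of `T(m :: q)`: some `o'` there has `pay o' ≤ pay o`. Since `o'`
lies in the subtree of the sibling `m`, disjoint from that of `n`, `o' ≠ o`, and injectivity of
the payoff makes the inequality strict. Worst payoffs are payoffs of outcomes in the finite set
`I`, so they cannot increase forever.
-/

section WorstPayoff

variable {O C : Type*} [Fintype O] [DecidableEq O] (I : Finset O) (D : C → Finset O)
  (pay : O → ℤ)

lemma target_cons_subset (n : C) (p : List C) : target I D pay (n :: p) ⊆ I ∩ D n := by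
  cases p <;> simp [target]

lemma target_subset (η : List C) : target I D pay η ⊆ I := by
  cases η with
  | nil => simp [target]
  | cons n p => exact (target_cons_subset I D pay n p).trans Finset.inter_subset_left

lemma exists_pay_le_of_mem_target_cons_cons {n m : C} {q : List C} {o : O}
    (ho : o ∈ target I D pay (n :: m :: q)) (hT : (target I D pay (m :: q)).Nonempty) :
    ∃ o' ∈ target I D pay (m :: q), pay o' ≤ pay o := by
  simp only [target, Finset.mem_filter, not_and, not_forall, exists_prop, not_lt] at ho
  exact ho.2 hT

lemma wp_le_pay {η : List C} {o : O} (ho : o ∈ target I D pay η) : wp I D pay η ≤ pay o :=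
  csInf_le ((target I D pay η).finite_toSet.image pay).bddBelow ⟨o, ho, rfl⟩

lemma exists_pay_eq_wp {η : List C} (h : (target I D pay η).Nonempty) :
    ∃ o ∈ target I D pay η, pay o = wp I D pay η :=
  Set.Nonempty.csInf_mem ((Finset.coe_nonempty.2 h).image pay)
    ((target I D pay η).finite_toSet.image pay)

lemma wp_mem_image {η : List C} (h : (target I D pay η).Nonempty) :
    wp I D pay η ∈ pay '' (I : Set O) :=
  let ⟨o, ho, hwp⟩ := exists_pay_eq_wp I D pay h
  ⟨o, target_subset I D pay η ho, hwp⟩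

lemma wp_lt_wp_cons_cons {n m : C} {q : List C} (hdisj : Disjoint (D n) (D m))
    (hpay : Function.Injective pay) (hT : (target I D pay (m :: q)).Nonempty)
    (hT' : (target I D pay (n :: m :: q)).Nonempty) :
    wp I D pay (m :: q) < wp I D pay (n :: m :: q) := by
  obtain ⟨o, ho, hwp⟩ := exists_pay_eq_wp I D pay hT'
  obtain ⟨o', ho', hle⟩ := exists_pay_le_of_mem_target_cons_cons I D pay ho hT
  have hne : o' ≠ o := by
    rintro rfl
    exact Finset.disjoint_left.1 hdisj (Finset.mem_inter.1 (target_cons_subset I D pay n _ ho)).2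
      (Finset.mem_inter.1 (target_cons_subset I D pay m q ho')).2
  calc wp I D pay (m :: q) ≤ pay o' := wp_le_pay I D pay ho'
    _ < pay o := hle.lt_of_ne (hpay.ne hne)
    _ = wp I D pay (n :: m :: q) := hwp

end WorstPayoff

theorem best_class_worst_payoff_increases_and_terminates_general
    {O C : Type*} [Fintype O] [DecidableEq O]
    (I : Finset O) (D : C → Finset O) (pay : O → ℤ) (F : Finset C)
    (hdisj : ∀ c c' : C, c ≠ c' → Disjoint (D c) (D c'))
    (hpay : Function.Injective pay) :
    (∀ (n : C) (p : List C), ValidState F (n :: p) → p ≠ [] →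
      (target I D pay p).Nonempty → (target I D pay (n :: p)).Nonempty →
      wp I D pay p < wp I D pay (n :: p)) ∧
    (∀ f : ℕ → List C,
      (∀ k, ValidState F (f k) ∧ (target I D pay (f k)).Nonempty) →
      ¬ (∀ k, wp I D pay (f k) < wp I D pay (f (k + 1)))) := by
  refine ⟨?_, fun f hf hinc => ?_⟩
  · rintro n (_ | ⟨m, q⟩) ⟨-, -, hchain⟩ hp hT hT'
    · exact absurd rfl hp
    exact wp_lt_wp_cons_cons I D pay (hdisj n m (List.isChain_cons_cons.1 hchain).1) hpay hT hT'
  · have hmono : StrictMono fun k => wp I D pay (f k) := strictMono_nat_of_lt_succ hinc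
    refine Set.infinite_range_of_injective hmono.injective ((I.finite_toSet.image pay).subset ?_)
    exact Set.range_subset_iff.2 fun k => wp_mem_image I D pay (hf k).2

/-- the worst payoffs of the best Newcombian Classes of increasing
order strictly increase: a non-degenerate state `(n, p)` has a strictly greater
worst payoff than `p`. Consequently, since outcomes are finite, the iterative
best-class procedure terminates: there is no infinite sequence of Newcombian
States with strictly increasing worst payoffs. -/
theorem best_class_worst_payoff_increases_and_terminates
    {O C : Type*} [Fintype O] [DecidableEq O] [DecidableEq C]
    (I : Finset O) (D : C → Finset O) (pay : O → ℤ) (F : Finset C)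
    (hI : I.Nonempty)
    (hcov : ∀ o ∈ I, ∃ c ∈ F, o ∈ D c)
    (hdisj : ∀ c c' : C, c ≠ c' → Disjoint (D c) (D c'))
    (hpay : Function.Injective pay) :
    (∀ (n : C) (p : List C), ValidState F (n :: p) → p ≠ [] →
      (target I D pay p).Nonempty → (target I D pay (n :: p)).Nonempty →
      wp I D pay p < wp I D pay (n :: p)) ∧
    (∀ f : ℕ → List C,
      (∀ k, ValidState F (f k) ∧ (target I D pay (f k)).Nonempty) →
      ¬ (∀ k, wp I D pay (f k) < wp I D pay (f (k + 1)))) :=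
  best_class_worst_payoff_increases_and_terminates_general I D pay F hdisj hpay
end

section
/- In the Take-or-Leave game with n dollars (n odd) and strictly increasing payoffs for both players along the game, the PPE is the path where both players always Leave until the final outcome, which is reached; in particular, the PPE outcome is the last leaf of the caterpillar tree and is Pareto-optimal, whereas backward induction yields the first Take outcome. -/
open Classical

/-- A finite two-player extensive-form game tree with perfect information:
leaves carry a pair of payoffs (Peter's, Mary's); internal nodes carry the
player to move (`true` = Peter, `false` = Mary) and a list of children. -/
inductive GameTree where
  | leaf (pP pM : ℤ) : GameTree
  | node (player : Bool) (children : List GameTree) : GameTree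

namespace GameTree

/-- The list of outcomes (leaf payoff pairs) of a game tree. -/
def outcomes : GameTree → List (ℤ × ℤ)
  | .leaf p m => [(p, m)]
  | .node _ ts => ts.attach.flatMap (fun t => outcomes t.1)
decreasing_by
  have := List.sizeOf_lt_of_mem t.2
  simp only [GameTree.node.sizeOf_spec]
  omega

/-- The payoff of a given player at an outcome. -/
def payOf (pl : Bool) (o : ℤ × ℤ) : ℤ := if pl then o.1 else o.2

/-- Every internal node has a nonempty list of children. -/
def WellFormed : GameTree → Prop
  | .leaf _ _ => True
  | .node _ ts => ts ≠ [] ∧ ∀ t ∈ ts.attach, WellFormed t.1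
decreasing_by
  have := List.sizeOf_lt_of_mem t.2
  simp only [GameTree.node.sizeOf_spec]
  omega

/-- Strict preferences: each player's payoffs at the outcomes are pairwise
distinct. -/
def StrictPref (g : GameTree) : Prop :=
  (g.outcomes.map Prod.fst).Nodup ∧ (g.outcomes.map Prod.snd).Nodup

/-- Target set of a Newcombian State (a list of children subtrees) with respect
to the current player's payoff `pay` and the remaining-outcome set `I`. -/
noncomputable def target (pay : ℤ × ℤ → ℤ) (I : Finset (ℤ × ℤ)) :
    List GameTree → Finset (ℤ × ℤ)
  | [] => ∅
  | [t] => I ∩ t.outcomes.toFinset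
  | t :: u :: p =>
      let Tp := target pay I (u :: p)
      (I ∩ t.outcomes.toFinset).filter
        (fun o => ¬ (Tp.Nonempty ∧ ∀ o' ∈ Tp, pay o < pay o'))

/-- `o` is discarded by some Newcombian State at a node with children `ts`,
remaining set `I` and current-player payoff `pay`. -/
def Discards (pay : ℤ × ℤ → ℤ) (ts : List GameTree) (I : Finset (ℤ × ℤ))
    (o : ℤ × ℤ) : Prop :=
  ∃ η : List GameTree, η ≠ [] ∧ (∀ t ∈ η, t ∈ ts) ∧ η.Chain' (· ≠ ·) ∧
    o ∈ I ∧ (∀ t ∈ η.head?, o ∉ t.outcomes.toFinset) ∧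
    (target pay I η).Nonempty ∧
    ∀ o' ∈ target pay I η, pay o < pay o'

/-- The set of outcomes surviving all Newcombian-State discardings at a node. -/
noncomputable def survivors (pay : ℤ × ℤ → ℤ) (ts : List GameTree)
    (I : Finset (ℤ × ℤ)) : Finset (ℤ × ℤ) :=
  I.filter (fun o => ¬ Discards pay ts I o)

/-- The Perfect Prediction Equilibrium construction: starting from the root
with remaining set `I`, at each node discard all outcomes discarded by some
Newcombian State, then move to the unique child whose outcomes contain all
remaining outcomes; the reached leaf is the PPE outcome. -/
inductive PPEReach : GameTree → Finset (ℤ × ℤ) → (ℤ × ℤ) → Prop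
  | leaf (p m : ℤ) (I : Finset (ℤ × ℤ)) (h : (p, m) ∈ I) :
      PPEReach (.leaf p m) I (p, m)
  | node (pl : Bool) (ts : List GameTree) (I : Finset (ℤ × ℤ))
      (t : GameTree) (o : ℤ × ℤ) (ht : t ∈ ts)
      (hsub : survivors (payOf pl) ts I ⊆ t.outcomes.toFinset)
      (hrec : PPEReach t (survivors (payOf pl) ts I) o) :
      PPEReach (.node pl ts) I o

/-- Backward induction (Subgame Perfect Equilibrium) outcome: at each node the
current player moves to the child whose backward-induction outcome maximizes
her payoff. -/
noncomputable def biOutcome : GameTree → ℤ × ℤ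
  | .leaf p m => (p, m)
  | .node pl ts =>
      ((ts.attach.map (fun t => biOutcome t.1)).argmax (payOf pl)).getD (0, 0)
decreasing_by
  have := List.sizeOf_lt_of_mem t.2
  simp only [GameTree.node.sizeOf_spec]
  omega

end GameTree

/-- An invertible ("caterpillar") tree: every internal node has one Take leaf
and one remaining subtree. -/
inductive CatTree where
  | last (pP pM : ℤ) : CatTree
  | node (player : Bool) (takeP takeM : ℤ) (rest : CatTree) : CatTree

namespace CatTree

/-- The game tree corresponding to an invertible tree. -/
def toGame : CatTree → GameTree
  | .last p m => .leaf p m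
  | .node pl tp tm r => .node pl [.leaf tp tm, r.toGame]

/-- Players alternate along an invertible tree. -/
def Alternating : CatTree → Prop
  | .last _ _ => True
  | .node _ _ _ (.last _ _) => True
  | .node pl _ _ (.node pl' a b r) => pl' = !pl ∧ Alternating (.node pl' a b r)

/-- The simplified PPE procedure for invertible trees: at each node, if the Take
outcome is better for the current player than all remaining outcomes in the
Leave subtree, stop with the Take outcome; otherwise Leave, discard all
remaining future outcomes worse than the Take outcome (the Take outcome itself
being discarded), and recurse. -/
noncomputable def simpleOutcome : CatTree → Finset (ℤ × ℤ) → Option (ℤ × ℤ)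
  | .last p m, _ => some (p, m)
  | .node pl tp tm r, I =>
      if ∀ o ∈ I ∩ r.toGame.outcomes.toFinset,
          GameTree.payOf pl o < GameTree.payOf pl (tp, tm)
      then some (tp, tm)
      else simpleOutcome r ((I ∩ r.toGame.outcomes.toFinset).filter
        (fun o => GameTree.payOf pl (tp, tm) < GameTree.payOf pl o))

end CatTree

/-- Payoffs of the j-th leaf of the Take-or-Leave game (leaves numbered from 1):
the taking player gets j, the other player gets j - 2; both players' payoffs
strictly increase along their own later takes. -/
def payoffPair (j : ℕ) : ℤ × ℤ :=
  if j % 2 = 1 then ((j : ℤ), (j : ℤ) - 2) else ((j : ℤ) - 2, (j : ℤ))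

/-- The Take-or-Leave caterpillar starting at leaf index j with k decision
nodes remaining (players alternate, odd indices are Peter's). -/
def tolAux : ℕ → ℕ → CatTree
  | j, 0 => .last (payoffPair j).1 (payoffPair j).2
  | j, k + 1 => .node (j % 2 = 1) (payoffPair j).1 (payoffPair j).2
      (tolAux (j + 1) k)

/-- The Take-or-Leave game with n dollars (n odd): n + 1 decision nodes, final
leaf at index n + 2 with payoffs (n + 2, n). -/
def tol (n : ℕ) : CatTree := tolAux 1 (n + 1)

/-! At Peter's node `j` (odd) the PPE discards his Take outcome `j`, because the outcome `j + 2`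
beats it and no later outcome ties with it, and Mary's next Take outcome `j + 1`, which gives him
only `j - 1`; every later outcome gives him more than `j` and survives. At Mary's node `j + 1` the
remaining outcomes all lie beyond her Take leaf, so nothing can be discarded there. The play thus
Leaves twice and meets the same situation at `j + 2`, until the last leaf. Backward induction
instead Takes at once, since each Take beats the opponent's Take at the next node. Peter never gets
more than the index of the leaf, so no outcome improves on `(n + 2, n)` for both players. -/

namespace GameTree

lemma outcomes_pair (pl : Bool) (t u : GameTree) :
    (node pl [t, u]).outcomes = t.outcomes ++ u.outcomes := by
  rw [outcomes]
  simp

lemma outcomes_leaf_toFinset (a : ℤ × ℤ) : (leaf a.1 a.2).outcomes.toFinset = {a} := by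
  simp [outcomes]

lemma target_singleton (pay : ℤ × ℤ → ℤ) (I : Finset (ℤ × ℤ)) (t : GameTree) :
    target pay I [t] = I ∩ t.outcomes.toFinset := by
  rw [target]

lemma target_cons_subset (pay : ℤ × ℤ → ℤ) (I : Finset (ℤ × ℤ)) (t : GameTree)
    (p : List GameTree) : target pay I (t :: p) ⊆ I ∩ t.outcomes.toFinset := by
  cases p with
  | nil => rw [target]
  | cons u p => rw [target]; exact Finset.filter_subset _ _

lemma target_pair_leaf (pay : ℤ × ℤ → ℤ) {I : Finset (ℤ × ℤ)} (t : GameTree) {a : ℤ × ℤ}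
    (ha : a ∈ I) :
    target pay I [t, leaf a.1 a.2] = (I ∩ t.outcomes.toFinset).filter (¬ pay · < pay a) := by
  rw [target, target_singleton, outcomes_leaf_toFinset, Finset.inter_singleton_of_mem ha]
  simp

/-- Every Newcombian State of `[L, R]` starts either at `R`, which contains `o`, or at `L`, whose
target cannot beat `o`. -/
lemma not_discards_pair {pay : ℤ × ℤ → ℤ} {L R : GameTree} {I : Finset (ℤ × ℤ)} {o : ℤ × ℤ}
    (hoR : o ∈ R.outcomes.toFinset) (hL : ∀ o' ∈ I ∩ L.outcomes.toFinset, pay o' ≤ pay o) :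
    ¬ Discards pay [L, R] I o := by
  rintro ⟨_ | ⟨t, η⟩, hne, hmem, -, -, hhead, ⟨w, hw⟩, hlt⟩
  · exact hne rfl
  rcases List.mem_pair.mp (hmem t List.mem_cons_self) with rfl | rfl
  · exact (hL w (target_cons_subset pay I t η hw)).not_gt (hlt w hw)
  · exact hhead t rfl hoR

lemma survivors_pair_of_subset_of_disjoint (pay : ℤ × ℤ → ℤ) {L R : GameTree}
    {I : Finset (ℤ × ℤ)} (hIR : I ⊆ R.outcomes.toFinset)
    (hIL : Disjoint I L.outcomes.toFinset) : survivors pay [L, R] I = I := by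
  rw [survivors, Finset.filter_eq_self]
  intro o ho
  refine not_discards_pair (hIR ho) fun o' ho' => ?_
  simp [Finset.disjoint_iff_inter_eq_empty.mp hIL] at ho'

/-- The witness is the Newcombian State `[R, L]`, whose target is the part of `R` at least as good
as `a` for the mover. -/
lemma discards_take_of_beaten {pay : ℤ × ℤ → ℤ} {a : ℤ × ℤ} {R : GameTree} {I : Finset (ℤ × ℤ)}
    (haI : a ∈ I) (haR : a ∉ R.outcomes.toFinset)
    (hbeat : ∃ o ∈ I ∩ R.outcomes.toFinset, pay a < pay o)
    (hnotie : ∀ o ∈ I ∩ R.outcomes.toFinset, pay o ≠ pay a) :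
    Discards pay [leaf a.1 a.2, R] I a := by
  have hRL : R ≠ leaf a.1 a.2 := fun h => haR (by simp [h, outcomes_leaf_toFinset])
  obtain ⟨b, hb, hab⟩ := hbeat
  have htarget : ∀ o, o ∈ target pay I [R, leaf a.1 a.2] ↔
      o ∈ I ∩ R.outcomes.toFinset ∧ pay a ≤ pay o := by
    simp [target_pair_leaf pay R haI]
  refine ⟨[R, leaf a.1 a.2], by simp, by simp, List.isChain_pair.mpr hRL, haI,
    by simpa using haR, ⟨b, (htarget b).mpr ⟨hb, hab.le⟩⟩, fun o' ho' => ?_⟩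
  obtain ⟨ho'R, hle⟩ := (htarget o').mp ho'
  exact hle.lt_of_ne (hnotie o' ho'R).symm

lemma discards_of_lt_take {pay : ℤ × ℤ → ℤ} {a o : ℤ × ℤ} {R : GameTree} {I : Finset (ℤ × ℤ)}
    (haI : a ∈ I) (hoI : o ∈ I) (hoa : o ≠ a) (hlt : pay o < pay a) :
    Discards pay [leaf a.1 a.2, R] I o := by
  have htarget : target pay I [leaf a.1 a.2] = {a} := by
    rw [target_singleton, outcomes_leaf_toFinset, Finset.inter_singleton_of_mem haI]
  refine ⟨[leaf a.1 a.2], by simp, by simp, List.isChain_singleton _, hoI, by simpa [outcomes],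
    htarget ▸ Finset.singleton_nonempty a, fun o' ho' => ?_⟩
  rw [htarget, Finset.mem_singleton] at ho'
  exact ho' ▸ hlt

/-- The Leave step of `CatTree.simpleOutcome`. -/
theorem survivors_take_leave {pay : ℤ × ℤ → ℤ} {a : ℤ × ℤ} {R : GameTree}
    {I : Finset (ℤ × ℤ)} (haI : a ∈ I) (hI : I ⊆ insert a R.outcomes.toFinset)
    (haR : a ∉ R.outcomes.toFinset) (hbeat : ∃ o ∈ I, pay a < pay o)
    (hnotie : ∀ o ∈ I, pay o = pay a → o = a) :
    survivors pay [leaf a.1 a.2, R] I = I.filter (pay a < pay ·) := by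
  have hmemR : ∀ o ∈ I, o ≠ a → o ∈ R.outcomes.toFinset := fun o ho hoa =>
    (Finset.mem_insert.mp (hI ho)).resolve_left hoa
  ext o
  simp only [survivors, Finset.mem_filter, and_congr_right_iff]
  intro hoI
  by_cases hoa : o = a
  · subst hoa
    simp only [lt_self_iff_false, iff_false, not_not]
    obtain ⟨b, hbI, hob⟩ := hbeat
    refine discards_take_of_beaten hoI haR ⟨b, ?_, hob⟩ fun o' ho' h => ?_
    · exact Finset.mem_inter.mpr ⟨hbI, hmemR b hbI (by rintro rfl; exact hob.false)⟩
    · exact haR (hnotie o' (Finset.mem_inter.mp ho').1 h ▸ (Finset.mem_inter.mp ho').2)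
  · constructor
    · intro hnd
      refine lt_of_le_of_ne (not_lt.mp fun hlt => hnd ?_) fun h => hoa (hnotie o hoI h.symm)
      exact discards_of_lt_take haI hoI hoa hlt
    · intro hlt
      refine not_discards_pair (hmemR o hoI hoa) fun o' ho' => ?_
      rw [outcomes_leaf_toFinset, Finset.inter_singleton_of_mem haI,
        Finset.mem_singleton] at ho'
      exact ho' ▸ hlt.le

lemma biOutcome_pair (pl : Bool) (t u : GameTree) :
    (node pl [t, u]).biOutcome =
      if payOf pl t.biOutcome < payOf pl u.biOutcome then u.biOutcome else t.biOutcome := by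
  rw [biOutcome]
  simp only [List.attach_cons, List.attach_nil, List.map_cons, List.map_nil]
  rw [List.argmax_cons, List.argmax_singleton]
  dsimp only
  split_ifs <;> rfl

end GameTree

open GameTree

lemma payoffPair_injective : Function.Injective payoffPair := by
  intro a b h
  have := congrArg (fun o : ℤ × ℤ => o.1 + o.2) h
  simp only [payoffPair] at this
  split_ifs at this <;> omega

lemma payOf_payoffPair (j m : ℕ) :
    payOf (decide (j % 2 = 1)) (payoffPair m) =
      if m % 2 = j % 2 then (m : ℤ) else (m : ℤ) - 2 := by
  rcases Nat.mod_two_eq_zero_or_one j with hj | hj <;>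
    rcases Nat.mod_two_eq_zero_or_one m with hm | hm <;>
      simp [payOf, payoffPair, hj, hm]

lemma fst_payoffPair_le (m : ℕ) : (payoffPair m).1 ≤ m := by
  unfold payoffPair
  split_ifs <;> simp

lemma toGame_tolAux_succ (j k : ℕ) :
    (tolAux j (k + 1)).toGame = .node (decide (j % 2 = 1))
      [.leaf (payoffPair j).1 (payoffPair j).2, (tolAux (j + 1) k).toGame] :=
  rfl

lemma outcomes_toFinset_tolAux (j k : ℕ) :
    (tolAux j k).toGame.outcomes.toFinset = (Finset.Icc j (j + k)).image payoffPair := by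
  induction k generalizing j with
  | zero => simp [tolAux, CatTree.toGame, outcomes]
  | succ k ih =>
    rw [toGame_tolAux_succ, outcomes_pair, List.toFinset_append, outcomes_leaf_toFinset, ih,
      ← Finset.insert_eq, ← Finset.image_insert, Finset.insert_Icc_add_one_left_eq_Icc (by omega)]
    congr 2
    omega

lemma payoffPair_mem_outcomes_tolAux {j k m : ℕ} :
    payoffPair m ∈ (tolAux j k).toGame.outcomes.toFinset ↔ j ≤ m ∧ m ≤ j + k := by
  rw [outcomes_toFinset_tolAux, payoffPair_injective.mem_finset_image, Finset.mem_Icc]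

lemma survivors_tolAux_add_two (j k : ℕ) :
    survivors (payOf (decide (j % 2 = 1)))
      [.leaf (payoffPair j).1 (payoffPair j).2, (tolAux (j + 1) (k + 1)).toGame]
      (tolAux j (k + 2)).toGame.outcomes.toFinset =
    (tolAux (j + 2) k).toGame.outcomes.toFinset := by
  have hpay := payOf_payoffPair j
  rw [survivors_take_leave]
  · rw [outcomes_toFinset_tolAux, outcomes_toFinset_tolAux, Finset.filter_image]
    congr 1
    ext m
    simp only [Finset.mem_filter, Finset.mem_Icc, hpay]
    split_ifs <;> omega
  · exact payoffPair_mem_outcomes_tolAux.mpr (by omega)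
  · rw [outcomes_toFinset_tolAux, outcomes_toFinset_tolAux, ← Finset.image_insert,
      Finset.insert_Icc_add_one_left_eq_Icc (by omega)]
    exact Finset.image_subset_image (Finset.Icc_subset_Icc le_rfl (by omega))
  · rw [payoffPair_mem_outcomes_tolAux]
    omega
  · refine ⟨payoffPair (j + 2), payoffPair_mem_outcomes_tolAux.mpr (by omega), ?_⟩
    simp only [hpay]
    split_ifs <;> omega
  · intro o ho h
    rw [outcomes_toFinset_tolAux, Finset.mem_image] at ho
    obtain ⟨m, hm, rfl⟩ := ho
    rw [Finset.mem_Icc] at hm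
    simp only [hpay] at h
    congr 1
    split_ifs at h <;> omega

lemma ppeReach_tolAux_add_two {j k : ℕ} {o : ℤ × ℤ}
    (h : PPEReach (tolAux (j + 2) k).toGame (tolAux (j + 2) k).toGame.outcomes.toFinset o) :
    PPEReach (tolAux j (k + 2)).toGame (tolAux j (k + 2)).toGame.outcomes.toFinset o := by
  have hpass : survivors (payOf (decide ((j + 1) % 2 = 1)))
      [.leaf (payoffPair (j + 1)).1 (payoffPair (j + 1)).2, (tolAux (j + 2) k).toGame]
      (tolAux (j + 2) k).toGame.outcomes.toFinset =
      (tolAux (j + 2) k).toGame.outcomes.toFinset := by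
    refine survivors_pair_of_subset_of_disjoint _ subset_rfl ?_
    rw [outcomes_leaf_toFinset, Finset.disjoint_singleton_right, payoffPair_mem_outcomes_tolAux]
    omega
  rw [toGame_tolAux_succ]
  refine .node _ _ _ (tolAux (j + 1) (k + 1)).toGame _ (by simp) ?_ ?_ <;>
    rw [← toGame_tolAux_succ, survivors_tolAux_add_two]
  · rw [outcomes_toFinset_tolAux, outcomes_toFinset_tolAux]
    exact Finset.image_subset_image (Finset.Icc_subset_Icc (by omega) (by omega))
  · show PPEReach (.node _ [_, (tolAux (j + 2) k).toGame]) _ o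
    refine .node _ _ _ (tolAux (j + 2) k).toGame _ (by simp) ?_ ?_ <;> rw [hpass]
    exact h

lemma ppeReach_tolAux_two_mul (i j : ℕ) :
    PPEReach (tolAux j (2 * i)).toGame (tolAux j (2 * i)).toGame.outcomes.toFinset
      (payoffPair (j + 2 * i)) := by
  induction i generalizing j with
  | zero => exact .leaf _ _ _ (payoffPair_mem_outcomes_tolAux.mpr (by omega))
  | succ i ih =>
    have := ppeReach_tolAux_add_two (ih (j + 2))
    rwa [show j + 2 + 2 * i = j + 2 * (i + 1) by omega] at this

lemma biOutcome_tolAux (j k : ℕ) : (tolAux j k).toGame.biOutcome = payoffPair j := by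
  induction k generalizing j with
  | zero => rw [tolAux, CatTree.toGame, biOutcome]
  | succ k ih =>
    have htake : ¬ payOf (decide (j % 2 = 1)) (payoffPair j) <
        payOf (decide (j % 2 = 1)) (payoffPair (j + 1)) := by
      rw [payOf_payoffPair, payOf_payoffPair, if_pos rfl, if_neg (by omega)]
      omega
    rw [toGame_tolAux_succ, biOutcome_pair, ih, biOutcome, if_neg htake]

/-- in the Take-or-Leave game (n odd) with strictly increasing
payoffs, the PPE reaches the final leaf of the caterpillar (both players always
Leave), this outcome is Pareto-optimal, whereas backward induction yields the
first Take outcome (1,-1). -/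
theorem tol_ppe_reaches_last_leaf (n : ℕ) (hn : Odd n) :
    GameTree.PPEReach (tol n).toGame (tol n).toGame.outcomes.toFinset
      ((n : ℤ) + 2, (n : ℤ)) ∧
    (tol n).toGame.biOutcome = (1, -1) ∧
    (∀ o ∈ (tol n).toGame.outcomes, ¬ ((n : ℤ) + 2 < o.1 ∧ (n : ℤ) < o.2)) := by
  obtain ⟨c, hc⟩ := hn
  have htol : tol n = tolAux 1 (2 * (c + 1)) := by rw [tol, hc]; ring_nf
  have hlast : payoffPair (1 + 2 * (c + 1)) = ((n : ℤ) + 2, (n : ℤ)) := by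
    rw [payoffPair, if_pos (by omega)]
    ext <;> push_cast <;> omega
  refine ⟨htol ▸ hlast ▸ ppeReach_tolAux_two_mul (c + 1) 1, ?_, ?_⟩
  · rw [tol, biOutcome_tolAux]
    simp [payoffPair]
  · rintro o ho ⟨hPeter, -⟩
    rw [← List.mem_toFinset, tol, outcomes_toFinset_tolAux, Finset.mem_image] at ho
    obtain ⟨m, hm, rfl⟩ := ho
    have := fst_payoffPair_le m
    rw [Finset.mem_Icc] at hm
    omega
end
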